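/- Let V be an invertible t×t L-banded matrix with diagonal values v_1,...,v_t (V_{i,j} = v_{max(i,j)}, v_t ≠ 0, v_i ≠ v_{i+1} for all i). Then 1ᵀ V⁻¹ = (0, ..., 0, v_t^{-1}), i.e., the column sums of V⁻¹ are zero except for the last column whose sum is 1/v_t; in particular 1ᵀ V⁻¹ 1 = 1/v_t. -/

import Mathlib

/-- The L-banded matrix with diagonal values `v`: entry `(i,j)` is `v (max i j)`. -/
noncomputable def Lband (t : ℕ) (v : Fin (t + 1) → ℂ) : Matrix (Fin (t + 1)) (Fin (t + 1)) ℂ :=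
  Matrix.of fun i j => v (max i j)

/-- For an invertible L-banded matrix, `1ᵀ V⁻¹ = (0, …, 0, v_t⁻¹)`; in
particular `1ᵀ V⁻¹ 1 = v_t⁻¹`. -/
theorem stmt4 (t : ℕ) (v : Fin (t + 1) → ℂ)
    (hne : ∀ i : Fin (t + 1), ∀ h : (i : ℕ) < t, v i ≠ v ⟨(i : ℕ) + 1, by omega⟩)
    (hvt : v (Fin.last t) ≠ 0) :
    (∀ j, (∑ i, (Lband t v)⁻¹ i j) =
        if j = Fin.last t then (v (Fin.last t))⁻¹ else 0) ∧
    (∑ i, ∑ j, (Lband t v)⁻¹ i j) = (v (Fin.last t))⁻¹ := by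
  classical
  set V := Lband t v with hV
  -- row-operation matrix
  let U : Matrix (Fin (t+1)) (Fin (t+1)) ℂ :=
    Matrix.of fun i k => if k = i then 1 else if (k : ℕ) = (i : ℕ) + 1 then -1 else 0
  have hUV : ∀ i j, (U * V) i j =
      if h : (i : ℕ) < t then V i j - V ⟨(i : ℕ) + 1, by omega⟩ j else V i j := by
    intro i j
    rw [Matrix.mul_apply]
    by_cases h : (i : ℕ) < t
    · rw [dif_pos h]
      set i1 : Fin (t+1) := ⟨(i : ℕ) + 1, by omega⟩ with hi1
      have hfun : ∀ k : Fin (t+1), U i k * V k j =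
          (if k = i then V i j else 0) + (if k = i1 then -V i1 j else 0) := by
        intro k
        by_cases hk : k = i
        · subst hk
          have : ¬ k = i1 := by
            intro hc
            have hc' := congrArg Fin.val hc
            simp [hi1] at hc'
          simp [U, this]
        · by_cases hk1 : k = i1
          · subst hk1
            have h2 : (i1 : ℕ) = (i : ℕ) + 1 := rfl
            simp [U, hk, h2]
          · have h3 : ¬ ((k : ℕ) = (i : ℕ) + 1) := by
              intro hc
              exact hk1 (Fin.ext (by simpa using hc))
            simp [U, hk, hk1, h3]
      rw [Finset.sum_congr rfl (fun k _ => hfun k), Finset.sum_add_distrib,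
        Finset.sum_ite_eq' Finset.univ i, Finset.sum_ite_eq' Finset.univ i1]
      simp [sub_eq_add_neg]
    · rw [dif_neg h]
      have hfun : ∀ k : Fin (t+1), U i k * V k j = if k = i then V i j else 0 := by
        intro k
        have h3 : ¬ ((k : ℕ) = (i : ℕ) + 1) := by
          have := k.isLt; have := i.isLt; omega
        by_cases hk : k = i
        · subst hk; simp [U]
        · simp [U, hk, h3]
      rw [Finset.sum_congr rfl (fun k _ => hfun k), Finset.sum_ite_eq' Finset.univ i]
      simp
  have hlast : ∀ i : Fin (t+1), ¬ ((i : ℕ) < t) → i = Fin.last t := by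
    intro i hi
    have := i.isLt
    exact Fin.ext (by simp [Fin.last]; omega)
  -- U*V is lower triangular
  have hlow : (U * V).BlockTriangular OrderDual.toDual := by
    intro i j hij
    have hij' : i < j := hij
    rw [hUV]
    by_cases h : (i : ℕ) < t
    · rw [dif_pos h]
      have h1 : max i j = j := max_eq_right hij'.le
      have h2 : max (⟨(i : ℕ) + 1, by omega⟩ : Fin (t+1)) j = j := by
        apply max_eq_right
        rw [Fin.le_def]
        have := Fin.lt_def.mp hij'
        simp; omega
      simp [hV, Lband, h1, h2]
    · exact absurd (hlast i h ▸ hij') (by simp [Fin.last, Fin.lt_def]; have := j.isLt; omega)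
  -- U is upper triangular with unit diagonal
  have hup : U.BlockTriangular id := by
    intro i j hij
    have hij' : (j : ℕ) < (i : ℕ) := hij
    have h1 : ¬ (j = i) := by intro hc; subst hc; omega
    have h2 : ¬ ((j : ℕ) = (i : ℕ) + 1) := by omega
    simp [U, h1, h2]
  have hdetU : U.det = 1 := by
    rw [Matrix.det_of_upperTriangular hup]
    apply Finset.prod_eq_one
    intro i _
    simp [U]
  have hdiag : ∀ i : Fin (t+1), (U * V) i i ≠ 0 := by
    intro i
    rw [hUV]
    by_cases h : (i : ℕ) < t
    · rw [dif_pos h]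
      have h1 : max i i = i := max_self i
      have h2 : max (⟨(i : ℕ) + 1, by omega⟩ : Fin (t+1)) i = ⟨(i : ℕ) + 1, by omega⟩ := by
        apply max_eq_left
        rw [Fin.le_def]; simp
      simp only [hV, Lband, Matrix.of_apply, h1, h2]
      exact sub_ne_zero.mpr (hne i h)
    · rw [dif_neg h]
      have := hlast i h
      subst this
      simpa [hV, Lband] using hvt
  have hdetV : V.det ≠ 0 := by
    have : U.det * V.det = ∏ i, (U * V) i i := by
      rw [← Matrix.det_mul, Matrix.det_of_lowerTriangular _ hlow]
    rw [hdetU, one_mul] at this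
    rw [this]
    exact Finset.prod_ne_zero_iff.mpr fun i _ => hdiag i
  have hmul : V * V⁻¹ = 1 := Matrix.mul_nonsing_inv V (Ne.isUnit hdetV)
  have key : ∀ j, (∑ i, V⁻¹ i j) = if j = Fin.last t then (v (Fin.last t))⁻¹ else 0 := by
    intro j
    have h1 : (V * V⁻¹) (Fin.last t) j = (1 : Matrix (Fin (t+1)) (Fin (t+1)) ℂ) (Fin.last t) j := by
      rw [hmul]
    rw [Matrix.mul_apply] at h1
    have h2 : ∀ k : Fin (t+1), V (Fin.last t) k = v (Fin.last t) := by
      intro k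
      have : max (Fin.last t) k = Fin.last t := max_eq_left (Fin.le_last k)
      simp [hV, Lband, this]
    rw [Finset.sum_congr rfl (fun k _ => by rw [h2 k])] at h1
    rw [← Finset.mul_sum] at h1
    have h3 : (∑ i, V⁻¹ i j) = (v (Fin.last t))⁻¹ * ((1 : Matrix (Fin (t+1)) (Fin (t+1)) ℂ) (Fin.last t) j) := by
      field_simp at h1 ⊢
      linear_combination h1
    rw [h3, Matrix.one_apply]
    by_cases hj : j = Fin.last t
    · simp [hj]
    · simp [hj, Ne.symm hj]
  refine ⟨key, ?_⟩
  rw [show (∑ i, ∑ j, V⁻¹ i j) = ∑ j, ∑ i, V⁻¹ i j from Finset.sum_comm]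
  rw [Finset.sum_congr rfl (fun j _ => key j)]
  simp
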